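/- The maps Φ_{L/K}^{(φ)} (the composite of φ_{L/K}^{(φ)} with the canonical projection modulo Y_{L/K}) and H_{L/K}^{(φ)} are mutually inverse: H∘Φ = id on Gal(L/K) and Φ∘H = id on U^◇_{X̃(L/K)}/Y_{L/K}. Concretely: (i) U_{σ_U}·Y_{L/K} = U·Y_{L/K} for every U ∈ U^◇_{X̃(L/K)}, and (ii) σ_{U_σ} = σ for every σ ∈ Gal(L/K). -/

import Mathlib

/-- `a^{1-φ} = a · φ(a)⁻¹`. -/
def oneSubFrob {A : Type*} [CommGroup A] (frob : A →* A) (a : A) : A := a * (frob a)⁻¹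

/-- `ℓ(σ) = Π^{σ-1} = Π^σ · Π⁻¹`. -/
def ellMap {G A : Type*} [Group G] [CommGroup A] [MulDistribMulAction G A]
    (Prim : A) (σ : G) : A := σ • Prim * Prim⁻¹

theorem oneSubFrob_inv_mul {A : Type*} [CommGroup A] (frob : A →* A) (a b : A) :
    oneSubFrob frob (a⁻¹ * b) = (oneSubFrob frob a)⁻¹ * oneSubFrob frob b := by
  have hom : oneSubFrob frob = ⇑(MonoidHom.id A * frob⁻¹) := rfl
  rw [hom, map_mul, map_inv]

/-- Here `A = X̃(L/K)^×`, `G = Gal(L/K)`, `frob = φ`, `Prim = Π_{φ;L/K}`, `Z = Z_{L/K}`,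
`D = U^◇_{X̃(L/K)}`; for `U ∈ U^◇`, `σ_U` is characterized by `U^{1-φ} · (Π^{σ_U-1})⁻¹ ∈ Z`,
and `U_σ` is any exact solution of `W^{1-φ} = Π^{σ-1}`; `Y_{L/K} = {y : y^{1-φ} ∈ Z}`, so
`W⁻¹U ∈ Y` reads `oneSubFrob frob (W⁻¹ * U) ∈ Z`; `hinj` is injectivity of `ℓ_{L/K}^{(φ)}`
modulo `Z`. -/
theorem fesenko_hazewinkel_mutually_inverse_general {G A : Type*} [Group G] [CommGroup A]
    [MulDistribMulAction G A]
    (frob : A →* A) (Prim : A) (Z D : Subgroup A)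
    (hinj : ∀ σ τ : G, (ellMap Prim σ)⁻¹ * ellMap Prim τ ∈ Z → σ = τ) :
    -- (i): if `σ = σ_U` and `W = U_σ` is an exact solution, then `W·Y = U·Y`
    (∀ U ∈ D, ∀ σ : G, oneSubFrob frob U * (ellMap Prim σ)⁻¹ ∈ Z →
      ∀ W : A, oneSubFrob frob W = ellMap Prim σ → oneSubFrob frob (W⁻¹ * U) ∈ Z) ∧
    -- (ii): if `U = U_σ` is an exact solution, then `σ_{U_σ} = σ`
    (∀ σ : G, ∀ U : A, oneSubFrob frob U = ellMap Prim σ →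
      ∀ τ : G, oneSubFrob frob U * (ellMap Prim τ)⁻¹ ∈ Z → τ = σ) := by
  refine ⟨fun U _ σ hσ W hW => ?_, fun σ U hU τ hτ => hinj τ σ ?_⟩
  · rwa [oneSubFrob_inv_mul, hW, mul_comm]
  · rwa [← hU, mul_comm]

/-- `Φ_{L/K}^{(φ)}` and `H_{L/K}^{(φ)}` are mutually inverse:
(i) `U_{σ_U}·Y_{L/K} = U·Y_{L/K}` for every `U ∈ U^◇_{X̃(L/K)}`, and
(ii) `σ_{U_σ} = σ` for every `σ ∈ Gal(L/K)`.

Here `A = X̃(L/K)^×`, `G = Gal(L/K)`, `frob = φ`, `Prim = Π_{φ;L/K}`, `Z = Z_{L/K}`,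
`D = U^◇_{X̃(L/K)}`, `UX = U_{X(L/K)} ⊆ Y_{L/K}`; for `U ∈ U^◇`, `σ_U` is characterized
by `U^{1-φ} · (Π^{σ_U-1})⁻¹ ∈ Z`, and `U_σ` is any exact solution of `W^{1-φ} = Π^{σ-1}`;
`Y_{L/K} = {y : y^{1-φ} ∈ Z}`, so `W⁻¹U ∈ Y` reads `oneSubFrob frob (W⁻¹ * U) ∈ Z`;
`hinj` is injectivity of `ℓ_{L/K}^{(φ)}` modulo `Z`, and `hUXY` records
`U_{X(L/K)} ⊆ Y_{L/K}`. -/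
theorem fesenko_hazewinkel_mutually_inverse {G A : Type*} [Group G] [CommGroup A]
    [MulDistribMulAction G A]
    (frob : A →* A) (Prim : A) (Z D UX : Subgroup A)
    (hUXY : ∀ u ∈ UX, oneSubFrob frob u ∈ Z)
    (hinj : ∀ σ τ : G, (ellMap Prim σ)⁻¹ * ellMap Prim τ ∈ Z → σ = τ) :
    -- (i): if `σ = σ_U` and `W = U_σ` is an exact solution, then `W·Y = U·Y`
    (∀ U ∈ D, ∀ σ : G, oneSubFrob frob U * (ellMap Prim σ)⁻¹ ∈ Z →
      ∀ W : A, oneSubFrob frob W = ellMap Prim σ → oneSubFrob frob (W⁻¹ * U) ∈ Z) ∧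
    -- (ii): if `U = U_σ` is an exact solution, then `σ_{U_σ} = σ`
    (∀ σ : G, ∀ U : A, oneSubFrob frob U = ellMap Prim σ →
      ∀ τ : G, oneSubFrob frob U * (ellMap Prim τ)⁻¹ ∈ Z → τ = σ) :=
  fesenko_hazewinkel_mutually_inverse_general frob Prim Z D hinj
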